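/- For n ∈ ℝ and constants C₀, C₁, C₂, define F(r) = 16C₁² + 48C₂²/(r⁴-1)⁴ + (8n²/(r⁸(r+1)⁴(r²+1)⁴))·h(r)/(r-1)⁴ on (1,∞), where h(r) = r²⁰ - 3r¹⁶ + 2(C₀+1)r¹² + 2(3C₀² - 3C₀ + 1)r⁸ - 3(C₀-1)²r⁴ + (C₀-1)². Then (assuming n ≠ 0) F extends continuously (remains bounded) as r → 1⁺ if and only if C₀ = 0 and C₂ = 0. -/
import Mathlib


open Set

private lemma aux_unbounded (c M δ : ℝ) (hc : 0 < c) (hδ : 0 < δ)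
    (h : ∀ r : ℝ, 1 < r → r < 1 + δ → c / (r - 1) ^ 4 ≤ M) : False := by
  have hM1 : (0:ℝ) < |M| + 1 := by positivity
  set t : ℝ := min (min (1/2) (c / (|M| + 1))) (δ / 2) with ht
  have ht0 : 0 < t :=
    lt_min (lt_min (by norm_num) (by positivity)) (by positivity)
  have ht1 : t ≤ 1/2 := le_trans (min_le_left _ _) (min_le_left _ _)
  have ht2 : t ≤ c / (|M| + 1) := le_trans (min_le_left _ _) (min_le_right _ _)
  have ht3 : t ≤ δ / 2 := min_le_right _ _
  have h3 : t ^ 3 ≤ 1 := pow_le_one₀ (le_of_lt ht0) (by linarith)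
  have h4 : t ^ 4 ≤ t := by
    calc t ^ 4 = t ^ 3 * t := by ring
      _ ≤ 1 * t := by nlinarith
      _ = t := one_mul t
  have hkey := h (1 + t) (by linarith) (by linarith)
  have hts : (1 + t - 1) ^ 4 = t ^ 4 := by ring
  rw [hts] at hkey
  have ht4pos : 0 < t ^ 4 := by positivity
  have hbig : (|M| + 1) ≤ c / t ^ 4 := by
    rw [le_div_iff₀ ht4pos]
    calc (|M| + 1) * t ^ 4 ≤ (|M| + 1) * t := by nlinarith
      _ ≤ (|M| + 1) * (c / (|M| + 1)) := by nlinarith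
      _ = c := by field_simp
  have hMM : M ≤ |M| := le_abs_self M
  linarith

set_option maxHeartbeats 1000000 in
/-- The curvature norm `|F_A|²` of the invariant I-Spin(7)-instanton with parameters
`(C₀, C₁, C₂)` on `E_n` (with `n ≠ 0`) remains bounded as `r → 1⁺` iff `C₀ = C₂ = 0`. -/
theorem I_instanton_curvature_bounded_iff (n C₀ C₁ C₂ : ℝ) (hn : n ≠ 0) :
    (∃ M : ℝ, ∀ r ∈ Set.Ioo (1 : ℝ) 2,
        |16 * C₁ ^ 2 + 48 * C₂ ^ 2 / (r ^ 4 - 1) ^ 4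
          + (8 * n ^ 2 / (r ^ 8 * (r + 1) ^ 4 * (r ^ 2 + 1) ^ 4))
            * ((r ^ 20 - 3 * r ^ 16 + 2 * (C₀ + 1) * r ^ 12
                + 2 * (3 * C₀ ^ 2 - 3 * C₀ + 1) * r ^ 8
                - 3 * (C₀ - 1) ^ 2 * r ^ 4 + (C₀ - 1) ^ 2) / (r - 1) ^ 4)| ≤ M)
      ↔ (C₀ = 0 ∧ C₂ = 0) := by
  constructor
  · rintro ⟨M, hM⟩
    have hn2 : 0 < n ^ 2 := by positivity
    have hC0 : C₀ = 0 := by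
      by_contra hC0ne
      have hε : (0:ℝ) < 2 * C₀ ^ 2 := by positivity
      have hcont : ContinuousAt (fun r : ℝ => r ^ 20 - 3 * r ^ 16 + 2 * (C₀ + 1) * r ^ 12
          + 2 * (3 * C₀ ^ 2 - 3 * C₀ + 1) * r ^ 8
          - 3 * (C₀ - 1) ^ 2 * r ^ 4 + (C₀ - 1) ^ 2) 1 := by fun_prop
      obtain ⟨δ, hδpos, hδ⟩ := Metric.continuousAt_iff.mp hcont (2 * C₀ ^ 2) hε
      have hδ' : (0:ℝ) < min δ 1 := lt_min hδpos one_pos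
      refine aux_unbounded (16 * n ^ 2 * C₀ ^ 2 / 12960000) M (min δ 1)
        (by positivity) hδ' (fun r hr1 hr2 => ?_)
      have hr2' : r < 2 := by
        have : min δ 1 ≤ 1 := min_le_right _ _
        linarith
      have hrδ : r < 1 + δ := by
        have : min δ 1 ≤ δ := min_le_left _ _
        linarith
      -- value of the polynomial near 1
      have hP : 2 * C₀ ^ 2 ≤ r ^ 20 - 3 * r ^ 16 + 2 * (C₀ + 1) * r ^ 12
          + 2 * (3 * C₀ ^ 2 - 3 * C₀ + 1) * r ^ 8
          - 3 * (C₀ - 1) ^ 2 * r ^ 4 + (C₀ - 1) ^ 2 := by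
        have hdist : dist r 1 < δ := by
          rw [Real.dist_eq, abs_of_pos (by linarith : (0:ℝ) < r - 1)]
          linarith
        have := hδ hdist
        simp only [Real.dist_eq, one_pow] at this
        have habs : |r ^ 20 - 3 * r ^ 16 + 2 * (C₀ + 1) * r ^ 12
            + 2 * (3 * C₀ ^ 2 - 3 * C₀ + 1) * r ^ 8
            - 3 * (C₀ - 1) ^ 2 * r ^ 4 + (C₀ - 1) ^ 2 - 4 * C₀ ^ 2| < 2 * C₀ ^ 2 := by
          have heq : (1:ℝ) ^ 20 - 3 * 1 ^ 16 + 2 * (C₀ + 1) * 1 ^ 12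
              + 2 * (3 * C₀ ^ 2 - 3 * C₀ + 1) * 1 ^ 8
              - 3 * (C₀ - 1) ^ 2 * 1 ^ 4 + (C₀ - 1) ^ 2 = 4 * C₀ ^ 2 := by ring
          rw [← heq]
          simpa using this
        have := abs_lt.mp habs
        linarith [this.1]
      have hs : (0:ℝ) < (r - 1) ^ 4 := pow_pos (by linarith) 4
      have hD : (0:ℝ) < r ^ 8 * (r + 1) ^ 4 * (r ^ 2 + 1) ^ 4 := by positivity
      have hDle : r ^ 8 * (r + 1) ^ 4 * (r ^ 2 + 1) ^ 4 ≤ 12960000 := by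
        have h1 : r ^ 8 ≤ 2 ^ 8 := pow_le_pow_left₀ (by linarith) (by linarith) 8
        have h2 : (r + 1) ^ 4 ≤ 3 ^ 4 := pow_le_pow_left₀ (by linarith) (by linarith) 4
        have h3 : (r ^ 2 + 1) ^ 4 ≤ 5 ^ 4 := by
          apply pow_le_pow_left₀ (by positivity)
          nlinarith
        have h12 : r ^ 8 * (r + 1) ^ 4 ≤ 2 ^ 8 * 3 ^ 4 :=
          mul_le_mul h1 h2 (by positivity) (by positivity)
        calc r ^ 8 * (r + 1) ^ 4 * (r ^ 2 + 1) ^ 4 ≤ (2 ^ 8 * 3 ^ 4) * 5 ^ 4 :=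
              mul_le_mul h12 h3 (by positivity) (by positivity)
          _ = 12960000 := by norm_num
      have hterm3 : 16 * n ^ 2 * C₀ ^ 2 / 12960000 / (r - 1) ^ 4 ≤
          (8 * n ^ 2 / (r ^ 8 * (r + 1) ^ 4 * (r ^ 2 + 1) ^ 4))
            * ((r ^ 20 - 3 * r ^ 16 + 2 * (C₀ + 1) * r ^ 12
                + 2 * (3 * C₀ ^ 2 - 3 * C₀ + 1) * r ^ 8
                - 3 * (C₀ - 1) ^ 2 * r ^ 4 + (C₀ - 1) ^ 2) / (r - 1) ^ 4) := by
        have hA : 8 * n ^ 2 / 12960000 ≤ 8 * n ^ 2 / (r ^ 8 * (r + 1) ^ 4 * (r ^ 2 + 1) ^ 4) := by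
          gcongr
        have hB : 2 * C₀ ^ 2 / (r - 1) ^ 4 ≤ (r ^ 20 - 3 * r ^ 16 + 2 * (C₀ + 1) * r ^ 12
            + 2 * (3 * C₀ ^ 2 - 3 * C₀ + 1) * r ^ 8
            - 3 * (C₀ - 1) ^ 2 * r ^ 4 + (C₀ - 1) ^ 2) / (r - 1) ^ 4 := by
          gcongr
        have hCc := mul_le_mul hA hB (by positivity) (by positivity)
        have hEq : (8 * n ^ 2 / 12960000) * (2 * C₀ ^ 2 / (r - 1) ^ 4)
            = 16 * n ^ 2 * C₀ ^ 2 / 12960000 / (r - 1) ^ 4 := by ring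
        linarith [hEq ▸ hCc]
      have hterm1 : (0:ℝ) ≤ 16 * C₁ ^ 2 := by positivity
      have hterm2 : (0:ℝ) ≤ 48 * C₂ ^ 2 / (r ^ 4 - 1) ^ 4 := by positivity
      have hMr := hM r ⟨hr1, hr2'⟩
      have hle := le_abs_self (16 * C₁ ^ 2 + 48 * C₂ ^ 2 / (r ^ 4 - 1) ^ 4
          + (8 * n ^ 2 / (r ^ 8 * (r + 1) ^ 4 * (r ^ 2 + 1) ^ 4))
            * ((r ^ 20 - 3 * r ^ 16 + 2 * (C₀ + 1) * r ^ 12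
                + 2 * (3 * C₀ ^ 2 - 3 * C₀ + 1) * r ^ 8
                - 3 * (C₀ - 1) ^ 2 * r ^ 4 + (C₀ - 1) ^ 2) / (r - 1) ^ 4))
      linarith
    subst hC0
    refine ⟨rfl, ?_⟩
    by_contra hC2ne
    refine aux_unbounded (48 * C₂ ^ 2 / 50625) M 1 (by positivity) one_pos
      (fun r hr1 hr2 => ?_)
    have hr2' : r < 2 := by linarith
    have hs : (0:ℝ) < (r - 1) ^ 4 := pow_pos (by linarith) 4
    have hr4 : (0:ℝ) < r ^ 4 - 1 := by
      have e : r ^ 4 - 1 = (r - 1) * ((r + 1) * (r ^ 2 + 1)) := by ring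
      rw [e]
      exact mul_pos (by linarith) (by positivity)
    have hs4 : (0:ℝ) < (r ^ 4 - 1) ^ 4 := pow_pos hr4 4
    -- the third term is nonneg when C₀ = 0
    have hP : (0:ℝ) ≤ r ^ 20 - 3 * r ^ 16 + 2 * ((0:ℝ) + 1) * r ^ 12
        + 2 * (3 * (0:ℝ) ^ 2 - 3 * 0 + 1) * r ^ 8
        - 3 * ((0:ℝ) - 1) ^ 2 * r ^ 4 + ((0:ℝ) - 1) ^ 2 := by
      have heq : r ^ 20 - 3 * r ^ 16 + 2 * ((0:ℝ) + 1) * r ^ 12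
          + 2 * (3 * (0:ℝ) ^ 2 - 3 * 0 + 1) * r ^ 8
          - 3 * ((0:ℝ) - 1) ^ 2 * r ^ 4 + ((0:ℝ) - 1) ^ 2
          = (r ^ 4 - 1) ^ 4 * (r ^ 4 + 1) := by ring
      rw [heq]
      positivity
    have hterm3 : (0:ℝ) ≤ (8 * n ^ 2 / (r ^ 8 * (r + 1) ^ 4 * (r ^ 2 + 1) ^ 4))
        * ((r ^ 20 - 3 * r ^ 16 + 2 * ((0:ℝ) + 1) * r ^ 12
            + 2 * (3 * (0:ℝ) ^ 2 - 3 * 0 + 1) * r ^ 8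
            - 3 * ((0:ℝ) - 1) ^ 2 * r ^ 4 + ((0:ℝ) - 1) ^ 2) / (r - 1) ^ 4) := by
      have hD : (0:ℝ) < r ^ 8 * (r + 1) ^ 4 * (r ^ 2 + 1) ^ 4 := by positivity
      exact mul_nonneg (by positivity) (div_nonneg hP (le_of_lt hs))
    have hbound : (r ^ 4 - 1) ^ 4 ≤ 50625 * (r - 1) ^ 4 := by
      have h15 : r ^ 4 - 1 ≤ 15 * (r - 1) := by
        have e : 15 * (r - 1) - (r ^ 4 - 1) = (r - 1) * (14 - r - r ^ 2 - r ^ 3) := by ring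
        have hcube : r ^ 3 ≤ 8 := by
          nlinarith [mul_pos (show (0:ℝ) < 2 - r by linarith)
            (show (0:ℝ) < r ^ 2 + 2 * r + 4 by positivity)]
        have hsq : r ^ 2 ≤ 4 := by nlinarith
        have hnn : 0 ≤ (r - 1) * (14 - r - r ^ 2 - r ^ 3) :=
          mul_nonneg (by linarith) (by linarith)
        linarith [e ▸ hnn]
      have := pow_le_pow_left₀ (le_of_lt hr4) h15 4
      calc (r ^ 4 - 1) ^ 4 ≤ (15 * (r - 1)) ^ 4 := this
        _ = 50625 * (r - 1) ^ 4 := by ring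
    have hterm2 : 48 * C₂ ^ 2 / 50625 / (r - 1) ^ 4 ≤ 48 * C₂ ^ 2 / (r ^ 4 - 1) ^ 4 := by
      rw [div_div]
      exact div_le_div_of_nonneg_left (by positivity) hs4 hbound
    have hterm1 : (0:ℝ) ≤ 16 * C₁ ^ 2 := by positivity
    have hMr := hM r ⟨hr1, hr2'⟩
    have hle := le_abs_self (16 * C₁ ^ 2 + 48 * C₂ ^ 2 / (r ^ 4 - 1) ^ 4
        + (8 * n ^ 2 / (r ^ 8 * (r + 1) ^ 4 * (r ^ 2 + 1) ^ 4))
          * ((r ^ 20 - 3 * r ^ 16 + 2 * ((0:ℝ) + 1) * r ^ 12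
              + 2 * (3 * (0:ℝ) ^ 2 - 3 * 0 + 1) * r ^ 8
              - 3 * ((0:ℝ) - 1) ^ 2 * r ^ 4 + ((0:ℝ) - 1) ^ 2) / (r - 1) ^ 4))
    linarith
  · rintro ⟨hC0, hC2⟩
    subst hC0; subst hC2
    refine ⟨16 * C₁ ^ 2 + 136 * n ^ 2, fun r hr => ?_⟩
    obtain ⟨hr1, hr2⟩ := hr
    have hrne : r ≠ 0 := by linarith
    have hr1ne : r - 1 ≠ 0 := by intro h; nlinarith [h]
    have hfact : (r ^ 20 - 3 * r ^ 16 + 2 * ((0:ℝ) + 1) * r ^ 12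
        + 2 * (3 * (0:ℝ) ^ 2 - 3 * 0 + 1) * r ^ 8
        - 3 * ((0:ℝ) - 1) ^ 2 * r ^ 4 + ((0:ℝ) - 1) ^ 2)
        = (r - 1) ^ 4 * ((r + 1) ^ 4 * (r ^ 2 + 1) ^ 4 * (r ^ 4 + 1)) := by ring
    have hrp : (0:ℝ) < r := by linarith
    have hsimp : 16 * C₁ ^ 2 + 48 * (0:ℝ) ^ 2 / (r ^ 4 - 1) ^ 4
        + (8 * n ^ 2 / (r ^ 8 * (r + 1) ^ 4 * (r ^ 2 + 1) ^ 4))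
          * ((r ^ 20 - 3 * r ^ 16 + 2 * ((0:ℝ) + 1) * r ^ 12
              + 2 * (3 * (0:ℝ) ^ 2 - 3 * 0 + 1) * r ^ 8
              - 3 * ((0:ℝ) - 1) ^ 2 * r ^ 4 + ((0:ℝ) - 1) ^ 2) / (r - 1) ^ 4)
        = 16 * C₁ ^ 2 + 8 * n ^ 2 * (r ^ 4 + 1) / r ^ 8 := by
      rw [hfact]
      have h1 : (r + 1) ≠ 0 := by linarith
      have h2 : (r ^ 2 + 1) ≠ 0 := by positivity
      field_simp
      ring
    rw [hsimp]
    have hr8 : (1:ℝ) ≤ r ^ 8 := one_le_pow₀ hr1.le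
    have hsq : r ^ 2 ≤ 4 := by nlinarith
    have h16 : r ^ 4 ≤ 16 := by nlinarith
    have h17 : r ^ 4 + 1 ≤ 17 * r ^ 8 := by nlinarith
    have hnum : 8 * n ^ 2 * (r ^ 4 + 1) ≤ 136 * n ^ 2 * r ^ 8 := by
      nlinarith [mul_le_mul_of_nonneg_left h17 (show (0:ℝ) ≤ 8 * n ^ 2 by positivity)]
    have hdiv : 8 * n ^ 2 * (r ^ 4 + 1) / r ^ 8 ≤ 136 * n ^ 2 := by
      rw [div_le_iff₀ (by positivity)]
      linarith
    have hpos : (0:ℝ) ≤ 16 * C₁ ^ 2 + 8 * n ^ 2 * (r ^ 4 + 1) / r ^ 8 := by positivity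
    rw [abs_of_nonneg hpos]
    linarith
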